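/- arXiv:2307.11677 — 3 statements merged into one kernel-verified Lean document; each statement's English description precedes it below -/
import Mathlib

section
/- Let P be a shortest s-t path in a weighted undirected graph G with positive edge weights, and suppose every vertex on P lies in V_r (i.e., the ball of radius r around it contains at most K vertices). Define a sequence starting at s where each next vertex is the farthest vertex on P (toward t) within distance r of the current vertex. If r > εd/2 + W where d = d(s,t), W is the maximum edge weight, and ε > 0, then consecutive vertices in this sequence (except possibly the final pair) have distance greater than εd/2, so the sequence reaches t in at most ⌈2/ε⌉ steps. -/
/-!
A greedy step that stops short of `t` cannot take one more edge, so it advances by more than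
`r - W > ε d / 2`. All steps but the last therefore cover disjoint stretches of the path, each
longer than `ε d / 2`, inside a path of length `d`: there are fewer than `2 / ε` of them.
-/

theorem mul_lt_sub_of_forall_lt_sub {a : ℕ → ℝ} {δ : ℝ} {n : ℕ} (hn : 0 < n)
    (h : ∀ i < n, δ < a (i + 1) - a i) : n * δ < a n - a 0 := by
  have := Finset.sum_lt_sum_of_nonempty (Finset.nonempty_range_iff.mpr hn.ne')
    fun i hi => h i (Finset.mem_range.mp hi)
  simpa only [Finset.sum_range_sub, Finset.sum_const, Finset.card_range, nsmul_eq_mul]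
    using this

theorem succ_le_ceil_of_forall_lt_sub {a : ℕ → ℝ} {ε d : ℝ} {n : ℕ}
    (hε : 0 < ε) (hd : 0 ≤ d) (hgap : ∀ i < n, ε * d / 2 < a (i + 1) - a i)
    (hspan : a n - a 0 ≤ d) :
    n + 1 ≤ ⌈2 / ε⌉₊ := by
  rcases Nat.eq_zero_or_pos n with rfl | hn
  · exact Nat.one_le_ceil_iff.mpr (by positivity)
  have hlt : n * (ε * d / 2) < d := (mul_lt_sub_of_forall_lt_sub hn hgap).trans_le hspan
  have hd_pos : 0 < d := lt_of_le_of_ne hd fun h => by simp [← h] at hlt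
  have : (n : ℝ) < 2 / ε := by
    rw [lt_div_iff₀ hε]
    nlinarith
  exact Nat.succ_le_of_lt (by exact_mod_cast this.trans_le (Nat.le_ceil _))

theorem stmt_0_general (ε d W r : ℝ) (hε : 0 < ε) (hd : 0 ≤ d)
    (hr : ε * d / 2 + W < r)
    (pos : ℕ → ℝ) (N : ℕ) (hmono : Monotone pos)
    (hpos0 : pos 0 = 0) (hposN : pos N = d)
    (hstep : ∀ i < N, pos (i + 1) - pos i ≤ W)
    (idx : ℕ → ℕ) (m : ℕ)
    (hidx0 : idx 0 = 0) (hidxm : idx m = N)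
    (hinc : StrictMonoOn idx (Set.Iic m))
    (hmax : ∀ i < m, idx (i + 1) < N → r < pos (idx (i + 1) + 1) - pos (idx i)) :
    (∀ i, i + 1 < m → ε * d / 2 < pos (idx (i + 1)) - pos (idx i)) ∧
      m ≤ ⌈2 / ε⌉₊ := by
  have hgap : ∀ i, i + 1 < m → ε * d / 2 < pos (idx (i + 1)) - pos (idx i) := by
    intro i hi
    have hbefore_t : idx (i + 1) < N :=
      hidxm ▸ hinc (Set.mem_Iic.mpr hi.le) (Set.mem_Iic.mpr le_rfl) hi
    linarith [hmax i (by omega) hbefore_t, hstep _ hbefore_t]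
  refine ⟨hgap, ?_⟩
  have hspan : pos (idx (m - 1)) - pos (idx 0) ≤ d := by
    have := hmono <|
      hinc.monotoneOn (Set.mem_Iic.mpr (m.sub_le 1)) (Set.mem_Iic.mpr le_rfl) (m.sub_le 1)
    rw [hidxm, hposN] at this
    rw [hidx0, hpos0]
    linarith
  have := succ_le_ceil_of_forall_lt_sub (a := fun i => pos (idx i)) hε hd
    (fun i hi => hgap i (by omega)) hspan
  omega

/-- Greedy skipping sequence along a shortest s-t path.
Vertices of the shortest path `P` are identified with their cumulative
positions `pos : ℕ → ℝ` along the path (so `d(x_i, x_j) = pos j - pos i`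
for `i ≤ j`, since `P` is a shortest path). `idx` enumerates the greedy
sequence: `idx 0 = 0` (vertex `s`), `idx m = N` (vertex `t`); each next
vertex is the farthest path vertex within distance `r` of the current one.
If `r > ε·d/2 + W`, consecutive sequence vertices (except possibly the
final pair) are more than `ε·d/2` apart, and the sequence reaches `t`
within `⌈2/ε⌉` steps. -/
theorem stmt_0 (ε d W r : ℝ) (hε : 0 < ε) (hd : 0 ≤ d) (hW : 0 < W)
    (hr : ε * d / 2 + W < r)
    (pos : ℕ → ℝ) (N : ℕ) (hmono : Monotone pos)
    (hpos0 : pos 0 = 0) (hposN : pos N = d)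
    (hstep : ∀ i < N, pos (i + 1) - pos i ≤ W)
    (idx : ℕ → ℕ) (m : ℕ)
    (hidx0 : idx 0 = 0) (hidxm : idx m = N)
    (hinc : StrictMonoOn idx (Set.Iic m))
    (hwithin : ∀ i < m, pos (idx (i + 1)) - pos (idx i) ≤ r)
    (hmax : ∀ i < m, idx (i + 1) < N → r < pos (idx (i + 1) + 1) - pos (idx i)) :
    (∀ i, i + 1 < m → ε * d / 2 < pos (idx (i + 1)) - pos (idx i)) ∧
      m ≤ ⌈2 / ε⌉₊ :=
  stmt_0_general ε d W r hε hd hr pos N hmono hpos0 hposN hstep idx m hidx0 hidxm hinc hmax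
end

section
/- Let P be a shortest s-t path with all vertices in V_r, r = (ε/2)d + W, d = d(s,t). Define sequences σ_s from s and σ_t from t as in the greedy skipping construction. Let x_k be the first vertex of σ_s with d(s,x_k) ≥ d/2 and y_ℓ the first vertex of σ_t with d(t,y_ℓ) ≥ d/2. Then k ≤ ⌈1/ε⌉, ℓ ≤ ⌈1/ε⌉, and d(x_k, y_{ℓ−1}) ≤ r; consequently x_k is within ⌈1/ε⌉ hops of s and within ℓ ≤ ⌈1/ε⌉ hops of t in the auxiliary graph H, i.e., the forward and backward BFS balls of hop-radius ⌈1/ε⌉ intersect on P. -/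
/-!
Along `P`, every greedy step that does not land on the far endpoint advances by more than
`εd/2`, so the steps taken strictly before the midpoint `d/2` is passed number fewer than
`1/ε`; this bounds `k` and, symmetrically from `t`, `ℓ`. The last steps of the two
sequences straddle the midpoint: `x_{k-1} < d/2 ≤ x_k` and `y_ℓ ≤ d/2 < y_{ℓ-1}`, and each
step is at most `r`, hence `|x_k - y_{ℓ-1}| ≤ r`. Replacing `y_ℓ` by `x_k` in `σ_t` then
gives a chain of `ℓ` hops of length at most `r` from `t` to `x_k`.
-/

theorem nsmul_le_sub_zero_of_le_sub_succ {G : Type*} [AddCommGroup G] [PartialOrder G]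
    [IsOrderedAddMonoid G] (f : ℕ → G) (δ : G) (m : ℕ)
    (hgap : ∀ i < m, δ ≤ f (i + 1) - f i) : m • δ ≤ f m - f 0 := by
  rw [← Finset.sum_range_sub]
  simpa using Finset.card_nsmul_le_sum (Finset.range m) _ δ fun i hi ↦
    hgap i (Finset.mem_range.1 hi)

theorem le_ceil_inv_of_forall_lt {ε c : ℝ} (hε : 0 < ε) (f : ℕ → ℝ) (hf0 : f 0 = 0) (k : ℕ)
    (hgap : ∀ i, i + 1 < k → ε * c ≤ f (i + 1) - f i) (hbelow : ∀ i < k, f i < c) :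
    k ≤ ⌈1 / ε⌉₊ := by
  obtain _ | m := k
  · exact Nat.zero_le _
  have hc : 0 < c := hf0 ▸ hbelow 0 m.succ_pos
  have hsum : m • (ε * c) ≤ f m - f 0 :=
    nsmul_le_sub_zero_of_le_sub_succ f _ m fun i hi ↦ hgap i (by omega)
  rw [nsmul_eq_mul, hf0, sub_zero] at hsum
  have hm : (m : ℝ) * ε < 1 := by
    have := hbelow m m.lt_succ_self
    nlinarith
  exact Nat.lt_ceil.2 (by rwa [lt_div_iff₀ hε])

theorem exists_chain_replace_last {α : Type*} (R : α → α → Prop) (f : ℕ → α) (z : α) (m : ℕ)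
    (hchain : ∀ i < m, R (f i) (f (i + 1))) (hlast : R (f m) z) :
    ∃ seq : ℕ → α, seq 0 = f 0 ∧ seq (m + 1) = z ∧ ∀ i < m + 1, R (seq i) (seq (i + 1)) := by
  refine ⟨Function.update f (m + 1) z, Function.update_of_ne (by omega) _ _,
    Function.update_self _ _ _, fun i hi ↦ ?_⟩
  rw [Function.update_of_ne (by omega)]
  rcases Nat.lt_succ_iff_lt_or_eq.1 hi with hi | rfl
  · rw [Function.update_of_ne (by omega)]
    exact hchain i hi
  · rwa [Function.update_self]

theorem stmt_9_general (ε d r : ℝ) (hε : 0 < ε) (hd : 0 < d)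
    (xs ys : ℕ → ℝ)
    (hxs0 : xs 0 = 0) (hys0 : ys 0 = d)
    (hymono : Antitone ys)
    (hxgap : ∀ i, xs (i + 1) ≠ d → ε * d / 2 < xs (i + 1) - xs i)
    (hygap : ∀ i, ys (i + 1) ≠ 0 → ε * d / 2 < ys i - ys (i + 1))
    (hxstep : ∀ i, xs (i + 1) - xs i ≤ r)
    (hystep : ∀ i, ys i - ys (i + 1) ≤ r)
    (k l : ℕ)
    (hk1 : d / 2 ≤ xs k) (hk2 : ∀ i < k, xs i < d / 2)
    (hl1 : d / 2 ≤ d - ys l) (hl2 : ∀ i < l, d - ys i < d / 2) :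
    k ≤ ⌈1 / ε⌉₊ ∧ l ≤ ⌈1 / ε⌉₊ ∧ |xs k - ys (l - 1)| ≤ r ∧
      (∃ seq : ℕ → ℝ, seq 0 = d ∧ seq l = xs k ∧
        ∀ i < l, |seq i - seq (i + 1)| ≤ r) := by
  have hk : k ≤ ⌈1 / ε⌉₊ := le_ceil_inv_of_forall_lt hε xs hxs0 k
    (fun i hi ↦ by
      have := hxgap i (by linarith [hk2 (i + 1) hi])
      linarith)
    hk2
  have hl : l ≤ ⌈1 / ε⌉₊ := le_ceil_inv_of_forall_lt hε (fun i ↦ d - ys i) (by simp [hys0]) l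
    (fun i hi ↦ by
      have := hygap i (by linarith [hl2 (i + 1) hi])
      linarith)
    hl2
  obtain ⟨k, rfl⟩ : ∃ k', k = k' + 1 := Nat.exists_eq_add_one.2 <| Nat.pos_of_ne_zero <| by
    rintro rfl; linarith
  obtain ⟨l, rfl⟩ : ∃ l', l = l' + 1 := Nat.exists_eq_add_one.2 <| Nat.pos_of_ne_zero <| by
    rintro rfl; linarith
  rw [Nat.add_sub_cancel]
  have hmeet : |xs (k + 1) - ys l| ≤ r := by
    have hx_before := hk2 k k.lt_succ_self
    have hy_before := hl2 l l.lt_succ_self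
    rw [abs_le]
    constructor <;> linarith [hxstep k, hystep l]
  refine ⟨hk, hl, hmeet, hys0 ▸ exists_chain_replace_last (|· - ·| ≤ r) ys _ l
    (fun i _ ↦ (abs_of_nonneg (sub_nonneg.2 (hymono i.le_succ))).trans_le (hystep i))
    (by rwa [abs_sub_comm])⟩

/-- Let `P` be a shortest `s`-`t` path of length `d` with all
vertices in `V_r`, `r = (ε/2)d + W`. The greedy sequences `σ_s` (from `s`)
and `σ_t` (from `t`) are identified with their cumulative positions
`xs, ys : ℕ → ℝ` along `P` (`xs 0 = 0` is `s`, `ys 0 = d` is `t`; distances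
along a shortest path are additive, so `d(x_i,x_j) = |xs j - xs i|` etc.).
Key facts (hypotheses): consecutive σ-vertices are more than `εd/2` apart
except possibly for a last step reaching the opposite endpoint, and since
`V(P) ⊆ V_r` each σ-step is a single hop of `H`, of length at most `r`.
Let `x_k` be the first vertex of `σ_s` with `d(s,x_k) ≥ d/2` and `y_ℓ` the
first vertex of `σ_t` with `d(t,y_ℓ) ≥ d/2`. Then `k ≤ ⌈1/ε⌉`,
`ℓ ≤ ⌈1/ε⌉`, and `d(x_k, y_{ℓ-1}) ≤ r`; consequently `x_k` is within
`k ≤ ⌈1/ε⌉` hops of `s` (the steps of `σ_s` themselves) and within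
`ℓ ≤ ⌈1/ε⌉` hops of `t` (follow `σ_t` to `y_{ℓ-1}`, then hop to `x_k`,
each hop of length at most `r`): the two BFS balls intersect on `P`. -/
theorem stmt_9 (ε d W r : ℝ) (hε : 0 < ε) (hd : 0 < d) (hW : 0 < W)
    (hr : r = ε * d / 2 + W)
    (xs ys : ℕ → ℝ)
    (hxs0 : xs 0 = 0) (hys0 : ys 0 = d)
    (hxmono : Monotone xs) (hymono : Antitone ys)
    (hxrange : ∀ i, 0 ≤ xs i ∧ xs i ≤ d)
    (hyrange : ∀ i, 0 ≤ ys i ∧ ys i ≤ d)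
    (hxgap : ∀ i, xs (i + 1) ≠ d → ε * d / 2 < xs (i + 1) - xs i)
    (hygap : ∀ i, ys (i + 1) ≠ 0 → ε * d / 2 < ys i - ys (i + 1))
    (hxstep : ∀ i, xs (i + 1) - xs i ≤ r)
    (hystep : ∀ i, ys i - ys (i + 1) ≤ r)
    (k l : ℕ)
    (hk1 : d / 2 ≤ xs k) (hk2 : ∀ i < k, xs i < d / 2)
    (hl1 : d / 2 ≤ d - ys l) (hl2 : ∀ i < l, d - ys i < d / 2) :
    k ≤ ⌈1 / ε⌉₊ ∧ l ≤ ⌈1 / ε⌉₊ ∧ |xs k - ys (l - 1)| ≤ r ∧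
      (∃ seq : ℕ → ℝ, seq 0 = d ∧ seq l = xs k ∧
        ∀ i < l, |seq i - seq (i + 1)| ≤ r) :=
  stmt_9_general ε d r hε hd xs ys hxs0 hys0 hymono hxgap hygap hxstep hystep k l hk1 hk2 hl1 hl2
end

section
/- (Correctness of the near-exact oracle, case 2) Suppose the shortest s-t path P contains some vertex v ∉ V_r with r = (ε/2)d + W, d = d(s,t), and suppose d(v,p(v)) ≤ r where p(v) is the pivot nearest to v. Then d(s,t) ≤ d(s,p(v)) + d(p(v),t) ≤ (1+ε)·d(s,t) + 2W. -/
theorem dist_add_dist_le_add_two_mul {V : Type*} (d : V → V → ℝ)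
    (hsymm : ∀ a b, d a b = d b a) (htri : ∀ a b c, d a c ≤ d a b + d b c) (s t v p : V) :
    d s p + d p t ≤ d s v + d v t + 2 * d v p := by
  have hsp : d s p ≤ d s v + d v p := htri s v p
  have hpt : d p t ≤ d v p + d v t := hsymm p v ▸ htri p v t
  linarith

/-- Correctness of the near-exact oracle, case 2: Suppose
`v` lies on a shortest `s`-`t` path (so `d(s,v) + d(v,t) = d(s,t)`) and
its nearest pivot `p` satisfies `d(v,p) ≤ r` with `r = (ε/2)·d(s,t) + W`
(which holds w.h.p. for `v ∉ V_r`). Then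
`d(s,t) ≤ d(s,p) + d(p,t) ≤ (1+ε)·d(s,t) + 2W`. -/
theorem stmt_14 {V : Type*} (d : V → V → ℝ)
    (hsymm : ∀ a b, d a b = d b a)
    (htri : ∀ a b c, d a c ≤ d a b + d b c)
    (s t v p : V) (ε W r : ℝ)
    (hr : r = (ε / 2) * d s t + W)
    (hpath : d s v + d v t = d s t)
    (hvp : d v p ≤ r) :
    d s t ≤ d s p + d p t ∧ d s p + d p t ≤ (1 + ε) * d s t + 2 * W := by
  refine ⟨htri s p t, ?_⟩
  calc d s p + d p t ≤ d s v + d v t + 2 * d v p :=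
        dist_add_dist_le_add_two_mul d hsymm htri s t v p
    _ ≤ d s t + 2 * r := by rw [hpath]; linarith
    _ = (1 + ε) * d s t + 2 * W := by rw [hr]; ring
end
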